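/- Let P(X) = Σ_{i=0}^m A_i X^i be a polynomial over the permutations. Then P is injective on the semiring of permutations (P(X) = P(Y) implies X = Y for all permutations X, Y) if and only if at least one non-constant coefficient A_i with i ≥ 1 contains the element 1 (a fixed point). -/

import Mathlib

/-- Product of permutations (multisets of cycle lengths): each pair `(a, b)` contributes
`gcd(a, b)` copies of `lcm(a, b)`. -/
def pmul (A B : Multiset ℕ) : Multiset ℕ :=
  A.bind fun a => B.bind fun b => Multiset.replicate (Nat.gcd a b) (Nat.lcm a b)

/-- Powers in the permutation semiring; `X^0` is the singleton `{1}`. -/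
def ppow (A : Multiset ℕ) : ℕ → Multiset ℕ
  | 0 => {1}
  | n + 1 => pmul A (ppow A n)

/-- Evaluation of the polynomial `Σ_{i=0}^m A_i X^i` over the permutation semiring. -/
def peval (A : ℕ → Multiset ℕ) (m : ℕ) (X : Multiset ℕ) : Multiset ℕ :=
  (Finset.range (m + 1)).sum fun i => pmul (A i) (ppow X i)

/-- A permutation is a multiset of positive natural numbers (cycle lengths). -/
def IsPerm (A : Multiset ℕ) : Prop := ∀ x ∈ A, 0 < x

/-!
For each `n`, the number `fixCount M n` of fixed points of `σ ^ n`, for `σ` of cycle type `M`, is a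
semiring homomorphism from permutations to `ℕ`, and these homomorphisms jointly separate
permutations: the number of `k`-cycles is recovered from `fixCount · k` and the numbers of
`d`-cycles for the proper divisors `d` of `k`.

If `1 ∈ A i₀` with `i₀ ≥ 1`, then for every `n` the image polynomial
`x ↦ Σ fixCount (A i) n * x ^ i` is strictly increasing, so `P X = P Y` forces
`fixCount X n = fixCount Y n` for all `n`, hence `X = Y`.

Otherwise every cycle length `e` occurring in a non-constant coefficient is at least `2`. Take
permutations `X ≠ Y` with `X - Y = ∏ₑ (e • {1} - {e})` in the ring completion; then
`fixCount X n - fixCount Y n = ∏ₑ (e - [e ∣ n] e)`. This vanishes whenever a non-constant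
coefficient `A i` has `fixCount (A i) n ≠ 0`, so `P X = P Y`, yet it equals `∏ₑ e ≠ 0` at `n = 1`.
-/

/-- The number of fixed points of `σ ^ n`, for a permutation `σ` with cycle type `M`. -/
def fixCount (M : Multiset ℕ) (n : ℕ) : ℕ := (M.filter (· ∣ n)).sum

lemma fixCount_zero (n : ℕ) : fixCount 0 n = 0 := rfl

lemma fixCount_add (M N : Multiset ℕ) (n : ℕ) :
    fixCount (M + N) n = fixCount M n + fixCount N n := by
  simp [fixCount]

lemma fixCount_sum {ι : Type*} (s : Finset ι) (M : ι → Multiset ℕ) (n : ℕ) :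
    fixCount (∑ i ∈ s, M i) n = ∑ i ∈ s, fixCount (M i) n :=
  map_sum (⟨⟨(fixCount · n), fixCount_zero n⟩, (fixCount_add · · n)⟩ : Multiset ℕ →+ ℕ) M s

lemma fixCount_bind (M : Multiset ℕ) (f : ℕ → Multiset ℕ) (n : ℕ) :
    fixCount (M.bind f) n = (M.map fun a => fixCount (f a) n).sum := by
  simp [fixCount, Multiset.filter_bind, Multiset.sum_bind]

lemma fixCount_singleton (a n : ℕ) : fixCount {a} n = if a ∣ n then a else 0 := by
  by_cases h : a ∣ n <;> simp [fixCount, Multiset.filter_singleton, h]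

lemma fixCount_eq_sum_map_singleton (M : Multiset ℕ) (n : ℕ) :
    fixCount M n = (M.map (fixCount {·} n)).sum := by
  induction M using Multiset.induction with
  | empty => rfl
  | cons a M ih => rw [← Multiset.singleton_add, fixCount_add, ih]; simp

lemma fixCount_replicate (k a n : ℕ) :
    fixCount (Multiset.replicate k a) n = k * fixCount {a} n := by
  induction k with
  | zero => simp [fixCount]
  | succ k ih => rw [Multiset.replicate_succ, ← Multiset.singleton_add, fixCount_add, ih]; ring

lemma fixCount_replicate_one (k n : ℕ) : fixCount (Multiset.replicate k 1) n = k := by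
  simp [fixCount_replicate, fixCount_singleton]

lemma fixCount_pmul (M N : Multiset ℕ) (n : ℕ) :
    fixCount (pmul M N) n = fixCount M n * fixCount N n := by
  have hpair (a b : ℕ) : fixCount (Multiset.replicate (a.gcd b) (a.lcm b)) n =
      fixCount {a} n * fixCount {b} n := by
    simp only [fixCount_replicate, fixCount_singleton, Nat.lcm_dvd_iff]
    by_cases ha : a ∣ n <;> by_cases hb : b ∣ n <;> simp [ha, hb, Nat.gcd_mul_lcm]
  simp only [pmul, fixCount_bind, hpair, Multiset.sum_map_mul_left, Multiset.sum_map_mul_right,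
    ← fixCount_eq_sum_map_singleton]

lemma fixCount_ppow (X : Multiset ℕ) (i n : ℕ) : fixCount (ppow X i) n = fixCount X n ^ i := by
  induction i with
  | zero => simp [ppow, fixCount_singleton]
  | succ k ih => rw [ppow, fixCount_pmul, ih, pow_succ, mul_comm]

lemma fixCount_peval (A : ℕ → Multiset ℕ) (m : ℕ) (X : Multiset ℕ) (n : ℕ) :
    fixCount (peval A m X) n =
      ∑ i ∈ Finset.range (m + 1), fixCount (A i) n * fixCount X n ^ i := by
  simp only [peval, fixCount_sum, fixCount_pmul, fixCount_ppow]

lemma fixCount_eq_count_mul_add_sum_properDivisors (M : Multiset ℕ) {k : ℕ} (hk : k ≠ 0) :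
    fixCount M k = M.count k * k + ∑ d ∈ k.properDivisors, M.count d * d := by
  have hsub : (M.filter (· ∣ k)).toFinset ⊆ k.divisors := fun d hd => by
    simp only [Multiset.mem_toFinset, Multiset.mem_filter] at hd
    exact Nat.mem_divisors.mpr ⟨hd.2, hk⟩
  rw [fixCount, Finset.sum_multiset_count_of_subset _ _ hsub, ← Nat.cons_self_properDivisors hk,
    Finset.sum_cons]
  refine congrArg₂ _ ?_ (Finset.sum_congr rfl fun d hd => ?_)
  · rw [Multiset.count_filter_of_pos (p := (· ∣ k)) dvd_rfl, smul_eq_mul]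
  · rw [Multiset.count_filter_of_pos (p := (· ∣ k)) (Nat.mem_properDivisors.mp hd).1, smul_eq_mul]

lemma count_zero_of_isPerm {M : Multiset ℕ} (hM : IsPerm M) : M.count 0 = 0 :=
  Multiset.count_eq_zero.mpr fun h => (hM 0 h).false

lemma eq_of_fixCount_eq {M N : Multiset ℕ} (hM : IsPerm M) (hN : IsPerm N)
    (h : ∀ n, fixCount M n = fixCount N n) : M = N := by
  ext k
  induction k using Nat.strong_induction_on with
  | _ k ih =>
    rcases Nat.eq_zero_or_pos k with rfl | hk
    · rw [count_zero_of_isPerm hM, count_zero_of_isPerm hN]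
    · have hk' := h k
      rw [fixCount_eq_count_mul_add_sum_properDivisors M hk.ne',
        fixCount_eq_count_mul_add_sum_properDivisors N hk.ne',
        Finset.sum_congr rfl fun d hd => by rw [ih d (Nat.mem_properDivisors.mp hd).2]] at hk'
      exact Nat.eq_of_mul_eq_mul_right hk (by omega)

lemma le_fixCount {M : Multiset ℕ} {a n : ℕ} (ha : a ∈ M) (han : a ∣ n) : a ≤ fixCount M n :=
  Multiset.le_sum_of_mem (Multiset.mem_filter.mpr ⟨ha, han⟩)

lemma exists_dvd_of_fixCount_ne_zero {M : Multiset ℕ} {n : ℕ} (h : fixCount M n ≠ 0) :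
    ∃ a ∈ M, a ∣ n := by
  have hne : M.filter (· ∣ n) ≠ 0 := fun h0 => h (by rw [fixCount, h0, Multiset.sum_zero])
  obtain ⟨a, ha⟩ := Multiset.exists_mem_of_ne_zero hne
  exact ⟨a, Multiset.mem_filter.mp ha⟩

lemma isPerm_add {M N : Multiset ℕ} (hM : IsPerm M) (hN : IsPerm N) : IsPerm (M + N) := by
  intro x hx
  rcases Multiset.mem_add.mp hx with h | h
  exacts [hM x h, hN x h]

lemma isPerm_pmul {M N : Multiset ℕ} (hM : IsPerm M) (hN : IsPerm N) : IsPerm (pmul M N) := by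
  intro x hx
  simp only [pmul, Multiset.mem_bind] at hx
  obtain ⟨a, ha, b, hb, hx⟩ := hx
  rw [Multiset.eq_of_mem_replicate hx]
  exact Nat.lcm_pos (hM a ha) (hN b hb)

lemma isPerm_singleton {a : ℕ} (ha : 0 < a) : IsPerm {a} := by
  simpa [IsPerm] using ha

lemma isPerm_ppow {X : Multiset ℕ} (hX : IsPerm X) (i : ℕ) : IsPerm (ppow X i) := by
  induction i with
  | zero => exact isPerm_singleton one_pos
  | succ k ih => exact isPerm_pmul hX ih

lemma isPerm_peval {A : ℕ → Multiset ℕ} {m : ℕ} (hA : ∀ i ≤ m, IsPerm (A i))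
    {X : Multiset ℕ} (hX : IsPerm X) : IsPerm (peval A m X) := by
  intro x hx
  obtain ⟨i, hi, hx⟩ := Multiset.mem_sum.mp hx
  exact isPerm_pmul (hA i (Finset.mem_range_succ_iff.mp hi)) (isPerm_ppow hX i) x hx

lemma strictMono_sum_mul_pow {c : ℕ → ℕ} {m i₀ : ℕ} (hi₀ : 1 ≤ i₀) (hi₀m : i₀ ≤ m)
    (hc : 0 < c i₀) : StrictMono fun x : ℕ => ∑ i ∈ Finset.range (m + 1), c i * x ^ i := by
  intro x y hxy
  refine Finset.sum_lt_sum (fun i _ => Nat.mul_le_mul_left _ (Nat.pow_le_pow_left hxy.le i))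
    ⟨i₀, Finset.mem_range_succ_iff.mpr hi₀m, ?_⟩
  exact Nat.mul_lt_mul_of_pos_left (Nat.pow_lt_pow_left hxy (by omega)) hc

/-- In the ring completion of the permutations, `X - Y = ∏_{e ∈ l} (e·{1} - {e})`. -/
def balancedPair : List ℕ → Multiset ℕ × Multiset ℕ
  | [] => ({1}, 0)
  | e :: l =>
      (pmul (Multiset.replicate e 1) (balancedPair l).1 + pmul {e} (balancedPair l).2,
       pmul (Multiset.replicate e 1) (balancedPair l).2 + pmul {e} (balancedPair l).1)

lemma isPerm_balancedPair {l : List ℕ} (hl : ∀ e ∈ l, 0 < e) :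
    IsPerm (balancedPair l).1 ∧ IsPerm (balancedPair l).2 := by
  induction l with
  | nil => exact ⟨isPerm_singleton one_pos, by simp [IsPerm, balancedPair]⟩
  | cons e l ih =>
    obtain ⟨ih₁, ih₂⟩ := ih fun x hx => hl x (List.mem_cons_of_mem e hx)
    have hrep : IsPerm (Multiset.replicate e 1) := fun x hx => by
      rw [Multiset.eq_of_mem_replicate hx]; exact one_pos
    have hsing := isPerm_singleton (hl e List.mem_cons_self)
    exact ⟨isPerm_add (isPerm_pmul hrep ih₁) (isPerm_pmul hsing ih₂),
      isPerm_add (isPerm_pmul hrep ih₂) (isPerm_pmul hsing ih₁)⟩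

lemma fixCount_balancedPair_sub (l : List ℕ) (n : ℕ) :
    (fixCount (balancedPair l).1 n : ℤ) - fixCount (balancedPair l).2 n =
      (l.map fun e : ℕ => (e : ℤ) - fixCount {e} n).prod := by
  induction l with
  | nil => simp [balancedPair, fixCount_singleton, fixCount_zero]
  | cons e l ih =>
    simp only [balancedPair, fixCount_add, fixCount_pmul, fixCount_replicate_one, List.map_cons,
      List.prod_cons, ← ih]
    push_cast
    ring

lemma fixCount_balancedPair_eq {l : List ℕ} {n : ℕ} (h : ∃ e ∈ l, e ∣ n) :
    fixCount (balancedPair l).1 n = fixCount (balancedPair l).2 n := by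
  obtain ⟨e, he, hen⟩ := h
  have hzero := fixCount_balancedPair_sub l n
  rw [List.prod_eq_zero (List.mem_map.mpr ⟨e, he, by simp [fixCount_singleton, hen]⟩)] at hzero
  omega

lemma fixCount_balancedPair_one_ne {l : List ℕ} (hl : ∀ e ∈ l, 2 ≤ e) :
    fixCount (balancedPair l).1 1 ≠ fixCount (balancedPair l).2 1 := by
  have hne : (l.map fun e : ℕ => (e : ℤ) - fixCount {e} 1).prod ≠ 0 := by
    refine List.prod_ne_zero fun h0 => ?_
    obtain ⟨e, he, he0⟩ := List.mem_map.mp h0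
    have h2 := hl e he
    have : ¬ e ∣ 1 := fun h => by have := Nat.le_of_dvd one_pos h; omega
    simp [fixCount_singleton, this] at he0
    omega
  rw [← fixCount_balancedPair_sub] at hne
  omega

lemma peval_eq_of_fixCount_eq {A : ℕ → Multiset ℕ} {m : ℕ} (hA : ∀ i ≤ m, IsPerm (A i))
    {X Y : Multiset ℕ} (hX : IsPerm X) (hY : IsPerm Y)
    (h : ∀ n, (∃ i ∈ Finset.Icc 1 m, ∃ e ∈ A i, e ∣ n) → fixCount X n = fixCount Y n) :
    peval A m X = peval A m Y := by
  refine eq_of_fixCount_eq (isPerm_peval hA hX) (isPerm_peval hA hY) fun n => ?_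
  simp only [fixCount_peval]
  refine Finset.sum_congr rfl fun i hi => ?_
  rcases Nat.eq_zero_or_pos i with rfl | hi₀
  · simp
  by_cases hAi : fixCount (A i) n = 0
  · simp [hAi]
  obtain ⟨e, he, hen⟩ := exists_dvd_of_fixCount_ne_zero hAi
  rw [h n ⟨i, Finset.mem_Icc.mpr ⟨hi₀, Finset.mem_range_succ_iff.mp hi⟩, e, he, hen⟩]

/-- a polynomial `P(X) = Σ_{i=0}^m A_i X^i` over the permutations is
injective over the semiring of permutations if and only if some non-constant
coefficient contains a fixed point (the element `1`). -/
theorem peval_injective_iff_fixpoint (A : ℕ → Multiset ℕ) (m : ℕ)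
    (hA : ∀ i ≤ m, IsPerm (A i)) :
    (∀ X Y : Multiset ℕ, IsPerm X → IsPerm Y → peval A m X = peval A m Y → X = Y) ↔
      ∃ i, 1 ≤ i ∧ i ≤ m ∧ (1 : ℕ) ∈ A i := by
  refine ⟨fun hinj => ?_, fun ⟨i₀, hi₀, hi₀m, hfix⟩ X Y hX hY hXY => ?_⟩
  · by_contra! hno
    set l := (∑ i ∈ Finset.Icc 1 m, A i).toList
    have hmem {e : ℕ} : e ∈ l ↔ ∃ i ∈ Finset.Icc 1 m, e ∈ A i := by
      simp [l, Multiset.mem_sum]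
    have hl : ∀ e ∈ l, 2 ≤ e := fun e he => by
      obtain ⟨i, hi, he⟩ := hmem.mp he
      obtain ⟨hi₁, him⟩ := Finset.mem_Icc.mp hi
      have := hA i him e he
      have : e ≠ 1 := fun h => hno i hi₁ him (h ▸ he)
      omega
    obtain ⟨hX, hY⟩ := isPerm_balancedPair fun e he => (hl e he).trans' one_le_two
    refine fixCount_balancedPair_one_ne hl (congrArg (fixCount · 1) (hinj _ _ hX hY ?_))
    exact peval_eq_of_fixCount_eq hA hX hY fun n ⟨i, hi, e, he, hen⟩ =>
      fixCount_balancedPair_eq ⟨e, hmem.mpr ⟨i, hi, he⟩, hen⟩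
  · refine eq_of_fixCount_eq hX hY fun n => ?_
    have hpos : 0 < fixCount (A i₀) n := le_fixCount hfix (one_dvd n)
    refine (strictMono_sum_mul_pow (c := fun i => fixCount (A i) n) hi₀ hi₀m hpos).injective ?_
    simpa only [fixCount_peval] using congrArg (fixCount · n) hXY
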